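/- Let P be a finite poset with n ≥ 2 elements that is (2+2)-free, (1+1+1)-free, and irreducible with respect to ordinal sum. Then among any three pairwise distinct lower sets of P, at least two are comparable under inclusion; that is, the distributive lattice L(P) of lower sets of P has width at most 2 (and the width is exactly 2). -/

import Mathlib

/-- `P` is `(2+2)`-free: there are no four distinct elements `a, b, c, d` with `a < b` and
`c < d` such that each of `a, b` is incomparable with each of `c, d`. -/
def TwoTwoFree (P : Type*) [PartialOrder P] : Prop :=
  ¬ ∃ a b c d : P, a < b ∧ c < d ∧ a ≠ c ∧ a ≠ d ∧ b ≠ c ∧ b ≠ d ∧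
    ¬ a ≤ c ∧ ¬ c ≤ a ∧ ¬ a ≤ d ∧ ¬ d ≤ a ∧ ¬ b ≤ c ∧ ¬ c ≤ b ∧ ¬ b ≤ d ∧ ¬ d ≤ b

/-- `P` is `(1+1+1)`-free: `P` contains no antichain of three elements. -/
def OneOneOneFree (P : Type*) [PartialOrder P] : Prop :=
  ¬ ∃ a b c : P, a ≠ b ∧ a ≠ c ∧ b ≠ c ∧
    ¬ a ≤ b ∧ ¬ b ≤ a ∧ ¬ a ≤ c ∧ ¬ c ≤ a ∧ ¬ b ≤ c ∧ ¬ c ≤ b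

/-- `P` is irreducible with respect to ordinal sum: `P` cannot be partitioned into two
nonempty subsets `A, B` such that `a < b` for every `a ∈ A` and `b ∈ B`. -/
def OrdinalSumIrreducible (P : Type*) [PartialOrder P] : Prop :=
  ¬ ∃ A B : Set P, A.Nonempty ∧ B.Nonempty ∧ Disjoint A B ∧ A ∪ B = Set.univ ∧
    ∀ a ∈ A, ∀ b ∈ B, a < b

/-!
Sort the elements of `P` by which of three pairwise non-nested lower sets `α, β, γ` contain
them. Two elements whose membership patterns are not nested are incomparable, so the three
"exactly one set" classes cannot all be inhabited, nor can the three "exactly two sets"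
classes, as either would give a `1+1+1`. Up to symmetry this leaves `α ⊆ β ∪ γ` and
`β ∩ γ ⊆ α`, and then witnesses of `α ⊈ γ`, `β ⊈ α`, `α ⊈ β`, `γ ⊈ α` have patterns
`110, 010, 101, 001`: two pairs, each a chain or part of a `1+1+1`, cross-incomparable, hence a
`2+2`.

For the width being exactly `2`: if all elements were comparable, the least one would split
off as an ordinal summand.
-/

section

variable {P : Type*} [PartialOrder P]

theorem OneOneOneFree.false_of_incompRel (h : OneOneOneFree P) {a b c : P}
    (hab : IncompRel (· ≤ ·) a b) (hac : IncompRel (· ≤ ·) a c) (hbc : IncompRel (· ≤ ·) b c) :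
    False :=
  h ⟨a, b, c, hab.ne, hac.ne, hbc.ne, hab.1, hab.2, hac.1, hac.2, hbc.1, hbc.2⟩

theorem TwoTwoFree.false_of_incompRel (h : TwoTwoFree P) {a b c d : P} (hab : a < b)
    (hcd : c < d) (hac : IncompRel (· ≤ ·) a c) (had : IncompRel (· ≤ ·) a d)
    (hbc : IncompRel (· ≤ ·) b c) (hbd : IncompRel (· ≤ ·) b d) : False :=
  h ⟨a, b, c, d, hab, hcd, hac.ne, had.ne, hbc.ne, hbd.ne,
    hac.1, hac.2, had.1, had.2, hbc.1, hbc.2, hbd.1, hbd.2⟩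

theorem false_of_incompRel_cross (h22 : TwoTwoFree P) (h111 : OneOneOneFree P) {a b c d : P}
    (hab : ¬ b ≤ a) (hcd : ¬ d ≤ c) (hac : IncompRel (· ≤ ·) a c) (had : IncompRel (· ≤ ·) a d)
    (hbc : IncompRel (· ≤ ·) b c) (hbd : IncompRel (· ≤ ·) b d) : False := by
  rcases not_le_iff_lt_or_incompRel.mp hab with hab | hab
  · rcases not_le_iff_lt_or_incompRel.mp hcd with hcd | hcd
    · exact h22.false_of_incompRel hab hcd hac had hbc hbd
    · exact h111.false_of_incompRel hcd hac.symm had.symm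
  · exact h111.false_of_incompRel hab hac hbc

theorem IsLowerSet.incompRel_of_mem_of_notMem {s t : Set P} (hs : IsLowerSet s)
    (ht : IsLowerSet t) {x y : P} (hxs : x ∈ s) (hxt : x ∉ t) (hyt : y ∈ t) (hys : y ∉ s) :
    IncompRel (· ≤ ·) x y :=
  ⟨fun h => hxt (ht h hyt), fun h => hys (hs h hxs)⟩

theorem false_of_not_subset_of_subset_union (h22 : TwoTwoFree P) (h111 : OneOneOneFree P)
    {α β γ : Set P} (hα : IsLowerSet α) (hβ : IsLowerSet β) (hγ : IsLowerSet γ)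
    (hαβ : ¬ α ⊆ β) (hβα : ¬ β ⊆ α) (hαγ : ¬ α ⊆ γ) (hγα : ¬ γ ⊆ α)
    (hαβγ : α ⊆ β ∪ γ) : False := by
  obtain ⟨a, haα, haγ⟩ := Set.not_subset.mp hαγ
  obtain ⟨b, hbα, hbβ⟩ := Set.not_subset.mp hαβ
  have haβ : a ∈ β := (hαβγ haα).resolve_right haγ
  have hbγ : b ∈ γ := (hαβγ hbα).resolve_left hbβ
  have hab := hβ.incompRel_of_mem_of_notMem hγ haβ haγ hbγ hbβ
  by_cases hβγα : β ∩ γ ⊆ α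
  · obtain ⟨c, hcβ, hcα⟩ := Set.not_subset.mp hβα
    obtain ⟨d, hdγ, hdα⟩ := Set.not_subset.mp hγα
    have hcγ : c ∉ γ := fun hcγ => hcα (hβγα ⟨hcβ, hcγ⟩)
    have hdβ : d ∉ β := fun hdβ => hdα (hβγα ⟨hdβ, hdγ⟩)
    exact false_of_incompRel_cross h22 h111 (fun h => hcα (hα h haα))
      (fun h => hdα (hα h hbα)) hab
      (hα.incompRel_of_mem_of_notMem hγ haα haγ hdγ hdα)
      (hβ.incompRel_of_mem_of_notMem hα hcβ hcα hbα hbβ)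
      (hβ.incompRel_of_mem_of_notMem hγ hcβ hcγ hdγ hdβ)
  · obtain ⟨e, ⟨heβ, heγ⟩, heα⟩ := Set.not_subset.mp hβγα
    exact h111.false_of_incompRel hab (hα.incompRel_of_mem_of_notMem hγ haα haγ heγ heα)
      (hα.incompRel_of_mem_of_notMem hβ hbα hbβ heβ heα)

theorem subset_or_subset_of_isLowerSet (h22 : TwoTwoFree P) (h111 : OneOneOneFree P)
    {α β γ : Set P} (hα : IsLowerSet α) (hβ : IsLowerSet β) (hγ : IsLowerSet γ) :
    (α ⊆ β ∨ β ⊆ α) ∨ (α ⊆ γ ∨ γ ⊆ α) ∨ (β ⊆ γ ∨ γ ⊆ β) := by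
  by_contra! ⟨⟨hαβ, hβα⟩, ⟨hαγ, hγα⟩, hβγ, hγβ⟩
  by_cases hα' : α ⊆ β ∪ γ
  · exact false_of_not_subset_of_subset_union h22 h111 hα hβ hγ hαβ hβα hαγ hγα hα'
  by_cases hβ' : β ⊆ α ∪ γ
  · exact false_of_not_subset_of_subset_union h22 h111 hβ hα hγ hβα hαβ hβγ hγβ hβ'
  by_cases hγ' : γ ⊆ α ∪ β
  · exact false_of_not_subset_of_subset_union h22 h111 hγ hα hβ hγα hαγ hγβ hβγ hγ'
  obtain ⟨x, hxα, hxβγ⟩ := Set.not_subset.mp hα'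
  obtain ⟨y, hyβ, hyαγ⟩ := Set.not_subset.mp hβ'
  obtain ⟨z, hzγ, hzαβ⟩ := Set.not_subset.mp hγ'
  simp only [Set.mem_union, not_or] at hxβγ hyαγ hzαβ
  exact h111.false_of_incompRel (hα.incompRel_of_mem_of_notMem hβ hxα hxβγ.1 hyβ hyαγ.1)
    (hα.incompRel_of_mem_of_notMem hγ hxα hxβγ.2 hzγ hzαβ.1)
    (hβ.incompRel_of_mem_of_notMem hγ hyβ hyαγ.2 hzγ hzαβ.2)

theorem OrdinalSumIrreducible.exists_incompRel [Finite P] [Nontrivial P]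
    (hirr : OrdinalSumIrreducible P) : ∃ a b : P, IncompRel (· ≤ ·) a b := by
  by_contra! hcomp
  obtain ⟨m, hm⟩ := exists_minimal_of_wellFoundedLT (fun _ : P => True)
    ⟨Classical.arbitrary P, trivial⟩
  have hm_le (b : P) : m ≤ b := by
    by_contra hmb
    rcases not_le_iff_lt_or_incompRel.mp hmb with hbm | hbm
    · exact hm.not_lt trivial hbm
    · exact hcomp b m hbm
  refine hirr ⟨{m}, {m}ᶜ, Set.singleton_nonempty m, exists_ne m, disjoint_compl_right,
    Set.union_compl_self _, ?_⟩
  rintro a rfl b hb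
  exact (hm_le b).lt_of_ne (Ne.symm hb)

end

/-- For a finite `{(2+2),(1+1+1)}`-free poset with `n ≥ 2` elements that is irreducible with
respect to ordinal sum, among any three pairwise distinct lower sets at least two are
comparable under inclusion, and there exist two incomparable lower sets; i.e. `L(P)` has
width exactly 2. -/
theorem statement16 {P : Type*} [PartialOrder P] [Fintype P]
    (hn : 2 ≤ Fintype.card P)
    (h22 : TwoTwoFree P) (h111 : OneOneOneFree P) (hirr : OrdinalSumIrreducible P) :
    (∀ α β γ : Set P, IsLowerSet α → IsLowerSet β → IsLowerSet γ →
      α ≠ β → α ≠ γ → β ≠ γ →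
      (α ⊆ β ∨ β ⊆ α) ∨ (α ⊆ γ ∨ γ ⊆ α) ∨ (β ⊆ γ ∨ γ ⊆ β)) ∧
    (∃ α β : Set P, IsLowerSet α ∧ IsLowerSet β ∧ ¬ α ⊆ β ∧ ¬ β ⊆ α) := by
  refine ⟨fun α β γ hα hβ hγ _ _ _ => subset_or_subset_of_isLowerSet h22 h111 hα hβ hγ, ?_⟩
  have : Nontrivial P := Fintype.one_lt_card_iff_nontrivial.mp hn
  obtain ⟨a, b, hab⟩ := hirr.exists_incompRel
  exact ⟨Set.Iic a, Set.Iic b, isLowerSet_Iic a, isLowerSet_Iic b,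
    Set.Iic_subset_Iic.not.mpr hab.not_le, Set.Iic_subset_Iic.not.mpr hab.not_ge⟩
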